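/- Let n ≥ 2, β > 0, γ ∈ ℝ and α ∈ ℝ, and define on the open chamber {λ ∈ ℝⁿ : 0 < λ₁ < … < λₙ} the function F(λ₁,…,λₙ) = ∏_{i=1}^n λ_i^{(α−(n−1)β)/2 − 1} e^{−γ λ_i} · ∏_{1≤i<j≤n} (λ_j − λ_i)^β and the drift coefficients b_i(λ) = α − 2γλ_i + β ∑_{j≠i} (λ_i + λ_j)/(λ_i − λ_j). Then F is differentiable on the open chamber and for every point λ of the open chamber and every i ∈ {1,…,n}: (b_i(λ) − 2)·F(λ) − 2 λ_i · ∂F/∂λ_i(λ) = 0. -/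

import Mathlib

/-!
Along the line `y ↦ update λ i y` each factor of `F` is a power or an exponential of an affine
function of `y`, so `∂_i F = F · (c / λ_i - γ + β ∑_{j ≠ i} (λ_i - λ_j)⁻¹)` with
`c = (α - (n-1)β)/2 - 1`. Hence `(b_i - 2) F - 2 λ_i ∂_i F` is `F` times
`α - 2 - 2c + β ∑_{j ≠ i} ((λ_i + λ_j) - 2 λ_i) / (λ_i - λ_j)`; every summand equals `-1`, so the
bracket is `α - 2 - 2c - (n-1)β = 0`.
-/

open Finset

theorem HasDerivAt.finsetProd_of_logDeriv {𝕜 ι 𝔸 : Type*} [NontriviallyNormedField 𝕜]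
    [NormedCommRing 𝔸] [NormedAlgebra 𝕜 𝔸] {u : Finset ι} {f : ι → 𝕜 → 𝔸} {g : ι → 𝔸} {x : 𝕜}
    (hf : ∀ i ∈ u, HasDerivAt (f i) (f i x * g i) x) :
    HasDerivAt (∏ i ∈ u, f i ·) ((∏ i ∈ u, f i x) * ∑ i ∈ u, g i) x := by
  classical
  refine (HasDerivAt.fun_finsetProd hf).congr_deriv ?_
  rw [mul_sum]
  refine sum_congr rfl fun i hi => ?_
  rw [smul_eq_mul, ← mul_assoc, prod_erase_mul _ _ hi]

theorem HasDerivAt.rpow_const_of_ne_zero {f : ℝ → ℝ} {f' x : ℝ} (p : ℝ)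
    (hf : HasDerivAt f f' x) (hx : f x ≠ 0) :
    HasDerivAt (fun y => f y ^ p) (f x ^ p * (p * f' / f x)) x := by
  refine (hf.rpow_const (p := p) (Or.inl hx)).congr_deriv ?_
  rw [Real.rpow_sub_one hx]
  field_simp

theorem hasDerivAt_update_apply {𝕜 ι : Type*} [NontriviallyNormedField 𝕜] [DecidableEq ι]
    (x : ι → 𝕜) (i k : ι) :
    HasDerivAt (fun y => Function.update x i y k) ((Pi.single i 1 : ι → 𝕜) k) (x i) :=
  hasDerivAt_pi.1 (hasDerivAt_update x i (x i)) k

theorem sum_lt_pairs_single_sub_div {ι 𝕜 : Type*} [Fintype ι] [LinearOrder ι] [DecidableEq ι]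
    [Field 𝕜] (x : ι → 𝕜) (i : ι) :
    ∑ p ∈ univ.filter (fun p : ι × ι => p.1 < p.2),
        ((Pi.single i 1 : ι → 𝕜) p.2 - (Pi.single i 1 : ι → 𝕜) p.1) / (x p.2 - x p.1) =
      ∑ j ∈ univ.erase i, (x i - x j)⁻¹ := by
  simp only [sum_filter, Fintype.sum_prod_type, Pi.single_apply, sub_div, ite_div, one_div,
    zero_div, sum_sub_distrib]
  -- only the pairs `(j, i)` with `j < i` and `(i, j)` with `i < j` contribute
  simp only [← ite_and, and_comm (a := _ < _)]
  simp only [ite_and, sum_ite_eq', mem_univ, if_true]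
  rw [sum_comm]
  simp only [sum_ite_eq', mem_univ, if_true]
  rw [← sum_sub_distrib, ← sum_erase_add _ _ (mem_univ i)]
  simp only [lt_self_iff_false, if_false, sub_zero, add_zero]
  refine sum_congr rfl fun j hj => ?_
  rcases lt_or_gt_of_ne (ne_of_mem_erase hj) with hlt | hgt
  · simp only [hlt, hlt.not_gt, if_true, if_false, sub_zero]
  · simp only [hgt, hgt.not_gt, if_true, if_false, zero_sub]
    rw [← inv_neg, neg_sub]

theorem sum_erase_add_div_sub_sub_two_mul_sum_inv {ι 𝕜 : Type*} [Fintype ι] [DecidableEq ι]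
    [Field 𝕜] {x : ι → 𝕜} (hx : Function.Injective x) (i : ι) :
    ∑ j ∈ univ.erase i, (x i + x j) / (x i - x j) -
        2 * x i * ∑ j ∈ univ.erase i, (x i - x j)⁻¹ = 1 - Fintype.card ι := by
  have hterm : ∀ j ∈ univ.erase i,
      (x i + x j) / (x i - x j) - 2 * x i * (x i - x j)⁻¹ = -1 := by
    intro j hj
    have hne : x i - x j ≠ 0 := sub_ne_zero.2 (hx.ne (ne_of_mem_erase hj).symm)
    field_simp
    ring
  rw [mul_sum, ← sum_sub_distrib, sum_congr rfl hterm, sum_const, card_erase_of_mem (mem_univ i),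
    card_univ, nsmul_eq_mul, Nat.cast_sub (Fintype.card_pos_iff.2 ⟨i⟩)]
  ring

noncomputable def stationaryDensity {ι : Type*} [Fintype ι] [LinearOrder ι] (c β γ : ℝ)
    (x : ι → ℝ) : ℝ :=
  (∏ k, x k ^ c * Real.exp (-γ * x k)) *
    ∏ p ∈ univ.filter (fun p : ι × ι => p.1 < p.2), (x p.2 - x p.1) ^ β

section stationaryDensity

variable {ι : Type*} [Fintype ι] [LinearOrder ι] {x : ι → ℝ}

theorem differentiableAt_stationaryDensity (c β γ : ℝ) (hx : ∀ k, x k ≠ 0)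
    (hinj : Function.Injective x) : DifferentiableAt ℝ (stationaryDensity c β γ) x := by
  classical
  have hpair : ∀ p ∈ univ.filter (fun p : ι × ι => p.1 < p.2),
      DifferentiableAt ℝ (fun y : ι → ℝ => (y p.2 - y p.1) ^ β) x := fun p hp => by
    fun_prop (disch := exact sub_ne_zero.2 (hinj.ne (mem_filter.1 hp).2.ne'))
  -- `fun_prop` does not see the ordering condition on the pairs, so this product is done by hand
  have hprod := (HasFDerivAt.finsetProd fun p hp => (hpair p hp).hasFDerivAt).differentiableAt
  unfold stationaryDensity
  fun_prop (disch := exact hx _)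

theorem hasDerivAt_stationaryDensity_update [DecidableEq ι] (c β γ : ℝ) (hx : ∀ k, x k ≠ 0)
    (hinj : Function.Injective x) (i : ι) :
    HasDerivAt (fun y => stationaryDensity c β γ (Function.update x i y))
      (stationaryDensity c β γ x * (c / x i - γ + β * ∑ j ∈ univ.erase i, (x i - x j)⁻¹))
      (x i) := by
  set δ : ι → ℝ := Pi.single i 1 with hδ
  have hcoord : ∀ k ∈ univ, HasDerivAt
      (fun y => Function.update x i y k ^ c * Real.exp (-γ * Function.update x i y k))
      ((x k ^ c * Real.exp (-γ * x k)) * (c * δ k / x k - γ * δ k)) (x i) := by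
    intro k _
    have hk := hasDerivAt_update_apply x i k
    have h := (hk.rpow_const_of_ne_zero c (by simpa using hx k)).fun_mul (hk.const_mul (-γ)).exp
    simp only [Function.update_eq_self] at h
    exact h.congr_deriv (by ring)
  have hpair : ∀ p ∈ univ.filter (fun p : ι × ι => p.1 < p.2), HasDerivAt
      (fun y => (Function.update x i y p.2 - Function.update x i y p.1) ^ β)
      ((x p.2 - x p.1) ^ β * (β * (δ p.2 - δ p.1) / (x p.2 - x p.1))) (x i) := by
    intro p hp
    have h := ((hasDerivAt_update_apply x i p.2).fun_sub
      (hasDerivAt_update_apply x i p.1)).rpow_const_of_ne_zero β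
      (by simpa using sub_ne_zero.2 (hinj.ne (mem_filter.1 hp).2.ne'))
    simpa only [Function.update_eq_self] using h
  have hP := HasDerivAt.finsetProd_of_logDeriv (x := x i)
    (f := fun k y => Function.update x i y k ^ c * Real.exp (-γ * Function.update x i y k))
    (g := fun k => c * δ k / x k - γ * δ k)
    (by simpa only [Function.update_eq_self] using hcoord)
  have hQ := HasDerivAt.finsetProd_of_logDeriv (x := x i)
    (f := fun (p : ι × ι) y => (Function.update x i y p.2 - Function.update x i y p.1) ^ β)
    (g := fun p => β * (δ p.2 - δ p.1) / (x p.2 - x p.1))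
    (by simpa only [Function.update_eq_self] using hpair)
  have hcoordSum : ∑ k, (c * δ k / x k - γ * δ k) = c / x i - γ := by
    simp [hδ, Pi.single_apply, ite_div]
  have hpairSum : ∑ p ∈ univ.filter (fun p : ι × ι => p.1 < p.2),
      β * (δ p.2 - δ p.1) / (x p.2 - x p.1) = β * ∑ j ∈ univ.erase i, (x i - x j)⁻¹ := by
    simp only [mul_div_assoc, ← mul_sum, hδ, sum_lt_pairs_single_sub_div]
  refine (hP.fun_mul hQ).congr_deriv ?_
  simp only [Function.update_eq_self, hcoordSum, hpairSum]
  unfold stationaryDensity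
  ring

end stationaryDensity

/-- The core computation in the proof of Proposition 2.6 of the paper: the
(unnormalized) stationary density `F` satisfies, on the open chamber,
`(b_i(λ) − 2)·F(λ) − 2 λ_i ∂F/∂λ_i(λ) = 0` for each coordinate `i`, where
`b_i` is the drift of the eigenvalue SDE. -/
theorem stmt_9 (n : ℕ) (hn : 2 ≤ n) (α β γ : ℝ)
    (D : Set (Fin n → ℝ)) (hD : D = {l | 0 < l ⟨0, by omega⟩ ∧ StrictMono l})
    (F : (Fin n → ℝ) → ℝ)
    (hF : ∀ l : Fin n → ℝ, F l =
      (∏ i : Fin n,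
          (l i) ^ ((α - ((n : ℝ) - 1) * β) / 2 - 1) * Real.exp (-γ * l i)) *
        ∏ p ∈ Finset.univ.filter (fun p : Fin n × Fin n => p.1 < p.2),
          (l p.2 - l p.1) ^ β)
    (b : Fin n → (Fin n → ℝ) → ℝ)
    (hb : ∀ (i : Fin n) (l : Fin n → ℝ), b i l =
      α - 2 * γ * l i + β * ∑ j ∈ Finset.univ.erase i, (l i + l j) / (l i - l j)) :
    DifferentiableOn ℝ F D ∧
      ∀ l ∈ D, ∀ i : Fin n, ∃ d : ℝ,
        HasDerivAt (fun y => F (Function.update l i y)) d (l i) ∧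
          (b i l - 2) * F l - 2 * l i * d = 0 := by
  set c := (α - ((n : ℝ) - 1) * β) / 2 - 1
  obtain rfl : F = stationaryDensity c β γ := funext hF
  have hchamber : ∀ l ∈ D, (∀ k, l k ≠ 0) ∧ Function.Injective l := by
    rw [hD]
    rintro l ⟨hpos, hmono⟩
    exact ⟨fun k => (hpos.trans_le (hmono.monotone (Fin.mk_le_mk.2 (Nat.zero_le k)))).ne',
      hmono.injective⟩
  refine ⟨fun l hl => ?_, fun l hl i => ?_⟩ <;> obtain ⟨hne, hinj⟩ := hchamber l hl
  · exact (differentiableAt_stationaryDensity c β γ hne hinj).differentiableWithinAt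
  refine ⟨_, hasDerivAt_stationaryDensity_update c β γ hne hinj i, ?_⟩
  have hsum := sum_erase_add_div_sub_sub_two_mul_sum_inv hinj i
  rw [Fintype.card_fin] at hsum
  have hc : l i * (c / l i) = c := mul_div_cancel₀ c (hne i)
  rw [hb]
  linear_combination
    (stationaryDensity c β γ l * β) * hsum - 2 * stationaryDensity c β γ l * hc
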